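/- arXiv:2508.07924 — 2 statements merged into one kernel-verified Lean document; each statement's English description precedes it below -/
import Mathlib

section
/- Fix an integer r ≥ 1 and let G be the group of maps g : K² → K² of the form g(x,y) = (b₁x + a₀ + a₁y + ⋯ + a_r y^r, b₂y + c) with b₁, b₂ ∈ K \ {0}. Let T ⊂ G be the subgroup of translations τ_{(a,b)}(x,y) = (x+a, y+b). Then the normalizer of T in G is exactly the set of g ∈ G with a₂ = a₃ = ⋯ = a_r = 0, i.e., N_G(T) = { (x,y) ↦ (b₁x + a₀ + a₁y, b₂y + c) : b₁, b₂ ∈ K \ {0}, a₀, a₁, c ∈ K }. -/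
/-- The group `Aut_f(F_r)` in coordinates: maps `(x,y) ↦ (b₁ x + P(y), b₂ y + c)`
with `b₁, b₂ ≠ 0`, `deg P ≤ r`. -/
def autF (K : Type*) [Field K] (r : ℕ) : Set ((K × K) → (K × K)) :=
  {g | ∃ (b₁ b₂ c : K) (P : Polynomial K), b₁ ≠ 0 ∧ b₂ ≠ 0 ∧ P.degree ≤ r ∧
    g = fun p => (b₁ * p.1 + P.eval p.2, b₂ * p.2 + c)}

/-- The subgroup of translations. -/
def transSet (K : Type*) [Field K] : Set ((K × K) → (K × K)) :=
  {t | ∃ a b : K, t = fun p => (p.1 + a, p.2 + b)}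

/-- The candidate normalizer: maps `(x,y) ↦ (b₁x + a₀ + a₁y, b₂y + c)`. -/
def normSet (K : Type*) [Field K] : Set ((K × K) → (K × K)) :=
  {g | ∃ b₁ b₂ a₀ a₁ c : K, b₁ ≠ 0 ∧ b₂ ≠ 0 ∧
    g = fun p => (b₁ * p.1 + a₀ + a₁ * p.2, b₂ * p.2 + c)}

/-- For `r ≥ 1`, the normalizer of the translation subgroup `T` in `Aut_f(F_r)` is exactly
the set of maps `(x,y) ↦ (b₁x + a₀ + a₁y, b₂y + c)`. -/
theorem stmt_6 (K : Type*) [Field K] [CharZero K] (r : ℕ) (hr : 1 ≤ r)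
    (g ginv : K × K → K × K) (hg : g ∈ autF K r)
    (h₁ : g ∘ ginv = id) (h₂ : ginv ∘ g = id) :
    ((fun t => g ∘ t ∘ ginv) '' transSet K = transSet K) ↔ g ∈ normSet K := by
  obtain ⟨b₁, b₂, c, P, hb₁, hb₂, hPdeg, hgdef⟩ := hg
  constructor
  · intro hEq
    have hmem : g ∘ (fun p : K × K => (p.1 + 0, p.2 + 1)) ∘ ginv ∈ transSet K := by
      rw [← hEq]
      exact Set.mem_image_of_mem _ ⟨0, 1, rfl⟩
    obtain ⟨a', b', hab⟩ := hmem
    have key : ∀ y : K, P.eval (y + 1) = P.eval y + a' := by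
      intro y
      have h3 := congrFun hab (g (0, y))
      have h4 : ginv (g (0, y)) = (0, y) := congrFun h₂ (0, y)
      simp only [Function.comp_apply, h4] at h3
      rw [hgdef] at h3
      have := congrArg Prod.fst h3
      simp only at this
      linear_combination this
    have hn : ∀ n : ℕ, P.eval (n : K) = a' * n + P.eval 0 := by
      intro n
      induction n with
      | zero => simp
      | succ m ih =>
        push_cast
        rw [key (m : K), ih]
        ring
    have hQ : P - (Polynomial.C a' * Polynomial.X + Polynomial.C (P.eval 0)) = 0 := by
      apply Polynomial.eq_zero_of_infinite_isRoot
      apply Set.Infinite.mono (s := Set.range (Nat.cast : ℕ → K))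
      · rintro x ⟨n, rfl⟩
        simp [Polynomial.IsRoot, hn n]
      · exact Set.infinite_range_of_injective Nat.cast_injective
    have hP : ∀ y : K, P.eval y = a' * y + P.eval 0 := by
      intro y
      have := sub_eq_zero.mp hQ
      rw [this]
      simp
    exact ⟨b₁, b₂, P.eval 0, a', c, hb₁, hb₂, by
      rw [hgdef]; funext p; rw [hP p.2]; refine Prod.ext ?_ rfl; simp; ring⟩
  · rintro ⟨B₁, B₂, a₀, a₁, C, hB₁, hB₂, hgd⟩
    ext f
    constructor
    · rintro ⟨t, ⟨a, b, rfl⟩, rfl⟩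
      refine ⟨B₁ * a + a₁ * b, B₂ * b, ?_⟩
      funext p
      have hp : g (ginv p) = p := congrFun h₁ p
      conv_rhs => rw [← hp]
      simp only [Function.comp_apply, hgd]
      refine Prod.ext ?_ ?_ <;> simp <;> ring
    · rintro ⟨a', b', rfl⟩
      refine ⟨fun p => (p.1 + (a' - a₁ * (b' / B₂)) / B₁, p.2 + b' / B₂), ⟨_, _, rfl⟩, ?_⟩
      funext p
      have hp : g (ginv p) = p := congrFun h₁ p
      conv_rhs => rw [← hp]
      simp only [Function.comp_apply, hgd]
      refine Prod.ext ?_ ?_ <;> simp <;> field_simp <;> ring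
end

section
/- Fix an integer r ≥ 1 and let G be the group of maps g(x,y) = (b₁x + a₀ + a₁y + ⋯ + a_r y^r, b₂y + c) on K², b₁, b₂ ≠ 0. Let T ⊂ G be the subgroup of translations and let Ψ ⊂ G be the subgroup { (x,y) ↦ (x + a + (y+b)^{r+1} − y^{r+1}, y+b) : (a,b) ∈ K² }. Then there is no g ∈ G with g T g⁻¹ = Ψ; i.e., the two additive actions φ_r and ψ_r on F_r are not conjugate inside Aut_f(F_r). -/
/-- The subgroup which is the image of the action `ψ_r`. -/
def psiSet (K : Type*) [Field K] (r : ℕ) : Set ((K × K) → (K × K)) :=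
  {t | ∃ a b : K,
    t = fun p => (p.1 + a + (p.2 + b) ^ (r + 1) - p.2 ^ (r + 1), p.2 + b)}

open Polynomial in
/-- For `r ≥ 1`, the translation subgroup `T` and the subgroup `Ψ` are not conjugate
inside `Aut_f(F_r)`: the actions `φ_r` and `ψ_r` are non-isomorphic. -/
theorem stmt_12 (K : Type*) [Field K] [CharZero K] (r : ℕ) (hr : 1 ≤ r) :
    ¬ ∃ g ginv : K × K → K × K, g ∈ autF K r ∧ g ∘ ginv = id ∧ ginv ∘ g = id ∧
      (fun t => g ∘ t ∘ ginv) '' transSet K = psiSet K r := by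
  rintro ⟨g, ginv, ⟨b₁, b₂, c, P, hb₁, hb₂, hPdeg, hg⟩, hgi, hig, himg⟩
  -- The ψ-element with parameters (0, 1) lies in the image.
  have ht₀ : (fun p : K × K => (p.1 + 0 + (p.2 + 1) ^ (r + 1) - p.2 ^ (r + 1), p.2 + 1))
      ∈ psiSet K r := ⟨0, 1, rfl⟩
  rw [← himg] at ht₀
  obtain ⟨t, ⟨a, b, ht⟩, hconj⟩ := ht₀
  -- Extract the pointwise functional identity.
  have key : ∀ z : K, b₁ * a + P.eval (z + b)
      = P.eval z + (b₂ * z + c + 1) ^ (r + 1) - (b₂ * z + c) ^ (r + 1) := by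
    intro z
    have hinv : ginv (g ((0 : K), z)) = ((0 : K), z) := congrFun hig ((0 : K), z)
    have h := congrFun hconj (g ((0 : K), z))
    simp only [Function.comp_apply, hinv] at h
    rw [hg, ht] at h
    have h1 := congrArg Prod.fst h
    simp only at h1
    simp only [zero_add, mul_zero, add_zero] at h1
    exact h1
  -- Turn it into a polynomial identity.
  set Q : Polynomial K :=
    C (b₁ * a) + Polynomial.taylor b P - P
      - ((C b₂ * X + C (c + 1)) ^ (r + 1) - (C b₂ * X + C c) ^ (r + 1)) with hQdef
  have hQ0 : Q = 0 := by
    apply Polynomial.funext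
    intro z
    simp only [hQdef, eval_sub, eval_add, eval_mul, eval_pow, eval_C, eval_X, eval_zero,
      Polynomial.taylor_eval]
    linear_combination key z
  -- Coefficient of degree r in `taylor b P` equals that of `P`.
  have htay : (Polynomial.taylor b P).coeff r = P.coeff r := by
    rw [Polynomial.taylor_coeff]
    have hhd : Polynomial.hasseDeriv r P = C (P.coeff r) := by
      ext n
      rw [Polynomial.hasseDeriv_coeff, Polynomial.coeff_C]
      rcases n with _ | n
      · simp
      · have hz : P.coeff (n + 1 + r) = 0 := by
          apply Polynomial.coeff_eq_zero_of_degree_lt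
          refine lt_of_le_of_lt hPdeg ?_
          exact_mod_cast Nat.lt_add_of_pos_left (Nat.succ_pos n)
        simp [hz]
    rw [hhd, Polynomial.eval_C]
  -- Coefficient of degree r in `(C b₂ * X + C d) ^ (r+1)`.
  have hcoe : ∀ d : K, ((C b₂ * X + C d : Polynomial K) ^ (r + 1)).coeff r
      = b₂ ^ r * d * (r + 1 : ℕ) := by
    intro d
    have hfac : (C b₂ * X + C d : Polynomial K) = C b₂ * (X + C (d * b₂⁻¹)) := by
      rw [mul_add, ← C_mul]
      congr 1
      field_simp
    rw [hfac, mul_pow, ← C_pow, Polynomial.coeff_C_mul, Polynomial.coeff_X_add_C_pow]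
    rw [Nat.add_sub_cancel_left, pow_one, Nat.choose_succ_self_right]
    field_simp
    ring
  -- Take coefficient r of the identity Q = 0.
  have hcr := congrArg (fun q : Polynomial K => q.coeff r) hQ0
  simp only [hQdef, Polynomial.coeff_sub, Polynomial.coeff_add, Polynomial.coeff_zero,
    htay, hcoe, Polynomial.coeff_C, if_neg (by omega : ¬ r = 0)] at hcr
  have hfin : b₂ ^ r * (r + 1 : ℕ) = 0 := by
    linear_combination -hcr
  have hb₂r : b₂ ^ r ≠ 0 := pow_ne_zero r hb₂
  have hnat : ((r + 1 : ℕ) : K) ≠ 0 := Nat.cast_ne_zero.mpr (Nat.succ_ne_zero r)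
  exact (mul_ne_zero hb₂r hnat) hfin
end
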